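/- arXiv:2112.00101 — 6 statements merged into one kernel-verified Lean document; each statement's English description precedes it below -/
import Mathlib

section
/- Let n be a natural number and x, y : Fin n → ℝ be arbitrary tuples. Let ρ and π be permutations of Fin n such that x ∘ ρ and y ∘ π are monotone (nondecreasing). Then the value ∑ i, (x (ρ i) − y (π i))² is the least element of the set { ∑ i, (x i − y (σ i))² : σ a permutation of Fin n }; i.e., the minimum matching cost over all bijections is attained by matching increasing rearrangements, and equals the sorted matching cost. -/
/-- If `ρ` and `π` are permutations sorting `x` and `y` into nondecreasing order, then the
sorted matching cost `∑ i, (x (ρ i) - y (π i))²` is the least element of the set of all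
matching costs `∑ i, (x i - y (σ i))²` over permutations `σ` of `Fin n`. -/
theorem sorted_matching_isLeast (n : ℕ) (x y : Fin n → ℝ) (ρ π : Equiv.Perm (Fin n))
    (hx : Monotone (x ∘ ρ)) (hy : Monotone (y ∘ π)) :
    IsLeast {c : ℝ | ∃ σ : Equiv.Perm (Fin n), c = ∑ i, (x i - y (σ i)) ^ 2}
      (∑ i, (x (ρ i) - y (π i)) ^ 2) := by
  constructor
  · refine ⟨π * ρ⁻¹, ?_⟩
    rw [← Equiv.sum_comp ρ (fun i => (x i - y ((π * ρ⁻¹) i)) ^ 2)]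
    simp
  · rintro c ⟨σ, rfl⟩
    have key : ∑ i, x i * y (σ i) ≤ ∑ i, x (ρ i) * y (π i) := by
      have hmono : Monovary (x ∘ ρ) (y ∘ π) := hx.monovary hy
      have := hmono.sum_mul_comp_perm_le_sum_mul (σ := π⁻¹ * σ * ρ)
      simp only [Function.comp] at this
      calc ∑ i, x i * y (σ i)
          = ∑ i, x (ρ i) * y (σ (ρ i)) := (Equiv.sum_comp ρ (fun i => x i * y (σ i))).symm
        _ = ∑ i, x (ρ i) * y (π ((π⁻¹ * σ * ρ) i)) := by simp [Equiv.Perm.mul_apply]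
        _ ≤ ∑ i, x (ρ i) * y (π i) := this
    have hx2 : ∑ i, x (ρ i) ^ 2 = ∑ i, x i ^ 2 := Equiv.sum_comp ρ (fun i => x i ^ 2)
    have hy2 : ∑ i, y (π i) ^ 2 = ∑ i, y (σ i) ^ 2 := by
      rw [Equiv.sum_comp π (fun i => y i ^ 2), ← Equiv.sum_comp σ (fun i => y i ^ 2)]
    have e1 : ∀ (a b : ℝ), (a - b) ^ 2 = a ^ 2 + b ^ 2 - 2 * (a * b) := by intros; ring
    simp only [e1, Finset.sum_sub_distrib, Finset.sum_add_distrib, ← Finset.mul_sum]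
    rw [hx2, hy2]
    linarith
end

section
/- Let n ≥ 1 and let b₁, …, bₙ : Fin m → ℝ be monotone (nondecreasing) tuples. Define the coordinatewise mean b̄ : Fin m → ℝ by b̄ l = (∑ i, bᵢ l) / n. Then: (1) b̄ is monotone; and (2) for every tuple γ : Fin m → ℝ and every family of permutations σ₁, …, σₙ of Fin m, ∑ i, ∑ l, (γ l − bᵢ (σᵢ l))² ≥ ∑ i, ∑ l, (b̄ l − bᵢ l)². In other words, the l-th smallest value of the topological centroid of the tuples b₁, …, bₙ is the mean of their l-th smallest values. -/
/-!
The cost splits as a sum over pairs `(i, l)`. First, for each `i` the rearrangement inequality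
shows that replacing `γ ∘ σ i⁻¹` by the sorted tuple `γ ∘ Tuple.sort γ` (which monovaries with
the monotone `b i`) can only lower `∑ l, (γ l - b i (σ i l))²`. The resulting sum is then
a sum over `l` of `∑ i, (c - b i l)²` with `c` independent of `i`, and each of these is minimised
by the mean `c = (∑ i, b i l) / n`.
-/

open Finset

/-- For empty `ι` the mean is the junk value `0 / 0`, but then both sides are empty sums. -/
theorem sum_sq_mean_sub_le {ι : Type*} [Fintype ι] (a : ι → ℝ) (c : ℝ) :
    ∑ i, ((∑ j, a j) / Fintype.card ι - a i) ^ 2 ≤ ∑ i, (c - a i) ^ 2 := by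
  set μ : ℝ := (∑ j, a j) / Fintype.card ι
  have h_centered : ∑ i, (μ - a i) = 0 := by
    rw [sum_sub_distrib, sum_const, card_univ, nsmul_eq_mul, sub_eq_zero]
    rcases isEmpty_or_nonempty ι with hι | hι
    · simp
    · exact mul_div_cancel₀ _ (by positivity)
  have h_split : ∑ i, (c - a i) ^ 2
      = ∑ i, (μ - a i) ^ 2 + ∑ _i : ι, (c - μ) ^ 2 + 2 * (c - μ) * ∑ i, (μ - a i) := by
    rw [mul_sum, ← sum_add_distrib, ← sum_add_distrib]
    exact sum_congr rfl fun i _ => by ring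
  rw [h_split, h_centered]
  have h_nonneg : 0 ≤ ∑ _i : ι, (c - μ) ^ 2 := sum_nonneg fun _ _ => sq_nonneg _
  linarith

theorem Monovary.sum_sq_sub_le_sum_sq_comp_perm_sub {ι : Type*} [Fintype ι] {f g : ι → ℝ}
    (hfg : Monovary f g) (σ : Equiv.Perm ι) :
    ∑ i, (f i - g i) ^ 2 ≤ ∑ i, (f (σ i) - g i) ^ 2 := by
  have h_expand (h : ι → ℝ) :
      ∑ i, (h i - g i) ^ 2 = ∑ i, h i ^ 2 + ∑ i, g i ^ 2 - 2 * ∑ i, h i * g i := by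
    rw [mul_sum, ← sum_add_distrib, ← sum_sub_distrib]
    exact sum_congr rfl fun i _ => by ring
  rw [h_expand f, h_expand (fun i => f (σ i)), Equiv.sum_comp σ (fun i => f i ^ 2)]
  linarith [hfg.sum_comp_perm_mul_le_sum_mul (σ := σ)]

theorem sum_sq_sort_sub_le_sum_sq_sub_comp_perm {m : ℕ} (γ β : Fin m → ℝ) (hβ : Monotone β)
    (σ : Equiv.Perm (Fin m)) :
    ∑ l, (γ (Tuple.sort γ l) - β l) ^ 2 ≤ ∑ l, (γ l - β (σ l)) ^ 2 := by
  have h_reindex : ∑ l, (γ l - β (σ l)) ^ 2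
      = ∑ l, (γ (Tuple.sort γ (((Tuple.sort γ).symm * σ.symm) l)) - β l) ^ 2 := by
    rw [← Equiv.sum_comp σ.symm]
    simp
  rw [h_reindex]
  exact ((Tuple.monotone_sort γ).monovary hβ).sum_sq_sub_le_sum_sq_comp_perm_sub _

theorem topological_centroid_closed_form_general (n m : ℕ)
    (b : Fin n → Fin m → ℝ) (hb : ∀ i, Monotone (b i)) :
    Monotone (fun l : Fin m => (∑ i, b i l) / (n : ℝ)) ∧
    ∀ (γ : Fin m → ℝ) (σ : Fin n → Equiv.Perm (Fin m)),
      ∑ i, ∑ l, ((∑ j, b j l) / (n : ℝ) - b i l) ^ 2 ≤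
        ∑ i, ∑ l, (γ l - b i (σ i l)) ^ 2 := by
  refine ⟨fun l l' hll' => ?_, fun γ σ => ?_⟩
  · exact div_le_div_of_nonneg_right (sum_le_sum fun i _ => hb i hll') n.cast_nonneg
  set g : Fin m → ℝ := fun l => γ (Tuple.sort γ l)
  calc ∑ i, ∑ l, ((∑ j, b j l) / (n : ℝ) - b i l) ^ 2
      = ∑ l, ∑ i, ((∑ j, b j l) / Fintype.card (Fin n) - b i l) ^ 2 := by
        rw [sum_comm, Fintype.card_fin]
    _ ≤ ∑ l, ∑ i, (g l - b i l) ^ 2 :=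
        sum_le_sum fun l _ => sum_sq_mean_sub_le (fun i => b i l) (g l)
    _ = ∑ i, ∑ l, (g l - b i l) ^ 2 := sum_comm
    _ ≤ ∑ i, ∑ l, (γ l - b i (σ i l)) ^ 2 :=
        sum_le_sum fun i _ => sum_sq_sort_sub_le_sum_sq_sub_comp_perm γ (b i) (hb i) (σ i)

/-- The topological centroid of monotone tuples `b 1, …, b n : Fin m → ℝ` is their
coordinatewise mean: the mean is monotone, and for every tuple `γ` and every family of
permutations `σ i`, the total matching cost from `γ` to the `b i` is at least the total
(sorted) matching cost from the coordinatewise mean to the `b i`. -/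
theorem topological_centroid_closed_form (n m : ℕ) (hn : 1 ≤ n)
    (b : Fin n → Fin m → ℝ) (hb : ∀ i, Monotone (b i)) :
    Monotone (fun l : Fin m => (∑ i, b i l) / (n : ℝ)) ∧
    ∀ (γ : Fin m → ℝ) (σ : Fin n → Equiv.Perm (Fin m)),
      ∑ i, ∑ l, ((∑ j, b j l) / (n : ℝ) - b i l) ^ 2 ≤
        ∑ i, ∑ l, (γ l - b i (σ i l)) ^ 2 :=
  topological_centroid_closed_form_general n m b hb
end

section
/- Let n ≥ 1 and let θ, b₁, …, bₙ : Fin m → ℝ be monotone (nondecreasing) tuples, with coordinatewise mean b̄ l = (∑ i, bᵢ l)/n. Let D(x,y) denote the squared matching distance D(x,y) = min over permutations σ of Fin m of ∑ l, (x l − y (σ l))². Then ∑ i, D(θ, bᵢ) = n · D(θ, b̄) + ∑ i, D(b̄, bᵢ). -/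
/-!
For monotone tuples the identity matching is optimal (rearrangement inequality), so every
matching distance involved is the plain squared Euclidean distance of the tuples; note that the
mean of monotone tuples is monotone. The identity is then, coordinate by coordinate, the
parallel-axis decomposition of a sum of squares about the mean.
-/

/-- The squared matching distance between two tuples in `Fin m → ℝ`: the minimum over
all permutations `σ` of `Fin m` of the total squared matching cost. -/
noncomputable def matchDist (m : ℕ) (x y : Fin m → ℝ) : ℝ :=
  ⨅ σ : Equiv.Perm (Fin m), ∑ l, (x l - y (σ l)) ^ 2

open Finset

theorem Monovary.sum_sub_sq_le_sum_sub_comp_perm_sq {ι : Type*} [Fintype ι] {x y : ι → ℝ}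
    (hxy : Monovary x y) (σ : Equiv.Perm ι) :
    ∑ i, (x i - y i) ^ 2 ≤ ∑ i, (x i - y (σ i)) ^ 2 := by
  have hcross : ∑ i, x i * y (σ i) ≤ ∑ i, x i * y i := hxy.sum_mul_comp_perm_le_sum_mul
  have hperm : ∑ i, y (σ i) ^ 2 = ∑ i, y i ^ 2 := Equiv.sum_comp σ fun i => y i ^ 2
  have expand : ∀ z : ι → ℝ,
      ∑ i, (x i - z i) ^ 2 = ∑ i, x i ^ 2 + ∑ i, z i ^ 2 - 2 * ∑ i, x i * z i := by
    intro z
    simp only [← sum_add_distrib, mul_sum, ← sum_sub_distrib]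
    exact sum_congr rfl fun i _ => by ring
  rw [expand y, expand fun i => y (σ i), hperm]
  linarith

theorem matchDist_eq_sum_sq_of_monotone {m : ℕ} {x y : Fin m → ℝ} (hx : Monotone x)
    (hy : Monotone y) : matchDist m x y = ∑ l, (x l - y l) ^ 2 := by
  refine le_antisymm ?_ (le_ciInf (hx.monovary hy).sum_sub_sq_le_sum_sub_comp_perm_sq)
  refine (ciInf_le ⟨0, ?_⟩ 1).trans_eq rfl
  rintro _ ⟨σ, rfl⟩
  exact sum_nonneg fun l _ => sq_nonneg _

theorem Finset.sum_sub_sq_eq_card_mul_sub_mean_sq_add {ι : Type*} (s : Finset ι) (b : ι → ℝ)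
    (t : ℝ) :
    ∑ i ∈ s, (t - b i) ^ 2 =
      #s * (t - (∑ j ∈ s, b j) / #s) ^ 2 + ∑ i ∈ s, ((∑ j ∈ s, b j) / #s - b i) ^ 2 := by
  set c := (∑ j ∈ s, b j) / #s
  have hdev : ∑ i ∈ s, (c - b i) = 0 := by
    rcases s.eq_empty_or_nonempty with rfl | hs
    · simp
    rw [sum_sub_distrib, sum_const, nsmul_eq_mul,
      mul_div_cancel₀ _ (Nat.cast_ne_zero.mpr hs.card_pos.ne'), sub_self]
  calc ∑ i ∈ s, (t - b i) ^ 2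
      = ∑ i ∈ s, ((t - c) ^ 2 + 2 * (t - c) * (c - b i) + (c - b i) ^ 2) :=
        sum_congr rfl fun i _ => by ring
    _ = #s * (t - c) ^ 2 + 2 * (t - c) * ∑ i ∈ s, (c - b i) + ∑ i ∈ s, (c - b i) ^ 2 := by
        rw [sum_add_distrib, sum_add_distrib, sum_const, nsmul_eq_mul, mul_sum]
    _ = #s * (t - c) ^ 2 + ∑ i ∈ s, (c - b i) ^ 2 := by rw [hdev]; ring

theorem matching_distance_decomposition_general (n m : ℕ)
    (θ : Fin m → ℝ) (b : Fin n → Fin m → ℝ)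
    (hθ : Monotone θ) (hb : ∀ i, Monotone (b i)) :
    ∑ i, matchDist m θ (b i) =
      (n : ℝ) * matchDist m θ (fun l => (∑ i, b i l) / (n : ℝ)) +
        ∑ i, matchDist m (fun l => (∑ j, b j l) / (n : ℝ)) (b i) := by
  have hmean : Monotone fun l => (∑ i, b i l) / (n : ℝ) := fun l l' hll' =>
    div_le_div_of_nonneg_right (sum_le_sum fun i _ => hb i hll') n.cast_nonneg
  simp only [matchDist_eq_sum_sq_of_monotone hθ (hb _), matchDist_eq_sum_sq_of_monotone hθ hmean,
    matchDist_eq_sum_sq_of_monotone hmean (hb _)]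
  rw [sum_comm (γ := Fin n), sum_comm (γ := Fin n), mul_sum, ← sum_add_distrib]
  refine sum_congr rfl fun l _ => ?_
  simpa using (univ : Finset (Fin n)).sum_sub_sq_eq_card_mul_sub_mean_sq_add (b · l) (θ l)

/-- Decomposition of the sum of squared matching distances from a monotone tuple `θ` to a
family of monotone tuples `b i`: it equals `n` times the distance from `θ` to the
coordinatewise mean (the topological centroid) plus a constant independent of `θ`. -/
theorem matching_distance_decomposition (n m : ℕ) (hn : 1 ≤ n)
    (θ : Fin m → ℝ) (b : Fin n → Fin m → ℝ)
    (hθ : Monotone θ) (hb : ∀ i, Monotone (b i)) :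
    ∑ i, matchDist m θ (b i) =
      (n : ℝ) * matchDist m θ (fun l => (∑ i, b i l) / (n : ℝ)) +
        ∑ i, matchDist m (fun l => (∑ j, b j l) / (n : ℝ)) (b i) :=
  matching_distance_decomposition_general n m θ b hθ hb
end

section
/- Let λ ∈ [0,1], n ≥ 1, E a finite index type, and p, q natural numbers. Let u, w₁, …, wₙ ∈ ℝ^E with mean w̄ = (∑ i, wᵢ)/n; let β, b₁, …, bₙ : Fin p → ℝ be monotone tuples with coordinatewise mean b̄, and δ, d₁, …, dₙ : Fin q → ℝ be monotone tuples with coordinatewise mean d̄. Write D for the squared matching distance (minimum over permutations of the total squared matching cost). Then ∑ i, [ (1−λ)‖u − wᵢ‖² + λ·(D(β, bᵢ) + D(δ, dᵢ)) ] = n(1−λ)‖u − w̄‖² + nλ·(D(β, b̄) + D(δ, d̄)) + (1−λ)∑ i, ‖wᵢ − w̄‖² + λ·∑ i, (D(b̄, bᵢ) + D(d̄, dᵢ)). In particular, minimizing the left-hand side over (u, β, δ) is equivalent to minimizing (1−λ)‖u − w̄‖² + λ·(D(β, b̄) + D(δ, d̄)). -/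
/-! For monotone tuples the infimum defining `matchDist` is attained at the identity
permutation (rearrangement inequality), and the coordinatewise mean of monotone tuples is again
monotone, so every matching distance in the statement is a plain sum of squared differences.
The identity is then the parallel-axis decomposition
`∑ ‖u - wᵢ‖² = n ‖u - w̄‖² + ∑ ‖wᵢ - w̄‖²`, which holds because `∑ (wᵢ - w̄) = 0`, applied to the
edge weights, the birth tuples and the death tuples and combined with weights `1 - λ` and `λ`. -/

open Finset

theorem matchDist_eq_sum_sq_of_monovary {m : ℕ} {x y : Fin m → ℝ} (h : Monovary x y) :
    matchDist m x y = ∑ l, (x l - y l) ^ 2 := by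
  refine le_antisymm (ciInf_le (Finite.bddBelow_range _) 1) (le_ciInf fun σ => ?_)
  have h_cross : ∑ l, x l * y (σ l) ≤ ∑ l, x l * y l := h.sum_mul_comp_perm_le_sum_mul
  have h_sq : ∑ l, y (σ l) ^ 2 = ∑ l, y l ^ 2 := Equiv.sum_comp σ (y · ^ 2)
  have expand (z : Fin m → ℝ) :
      ∑ l, (x l - z l) ^ 2 = ∑ l, x l ^ 2 - 2 * ∑ l, x l * z l + ∑ l, z l ^ 2 := by
    simp only [sub_sq, sum_add_distrib, sum_sub_distrib, mul_sum, mul_assoc]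
  rw [expand (fun l => y (σ l)), expand y]
  linarith

theorem sum_norm_sub_sq_eq {F ι : Type*} [NormedAddCommGroup F] [InnerProductSpace ℝ F]
    [Fintype ι] (u : F) (w : ι → F) :
    ∑ i, ‖u - w i‖ ^ 2 =
      Fintype.card ι * ‖u - (Fintype.card ι : ℝ)⁻¹ • ∑ i, w i‖ ^ 2 +
        ∑ i, ‖w i - (Fintype.card ι : ℝ)⁻¹ • ∑ j, w j‖ ^ 2 := by
  set m := (Fintype.card ι : ℝ)⁻¹ • ∑ i, w i
  have h_center : ∑ i, (w i - m) = 0 := by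
    rcases isEmpty_or_nonempty ι with _ | _
    · simp
    · rw [sum_sub_distrib, sum_const, card_univ, ← Nat.cast_smul_eq_nsmul ℝ,
        smul_inv_smul₀ (Nat.cast_ne_zero.2 Fintype.card_ne_zero), sub_self]
  calc ∑ i, ‖u - w i‖ ^ 2
        = ∑ i, (‖u - m‖ ^ 2 - 2 * inner ℝ (u - m) (w i - m) + ‖w i - m‖ ^ 2) := by
          refine sum_congr rfl fun i _ => ?_
          rw [← norm_sub_sq_real, sub_sub_sub_cancel_right]
    _ = Fintype.card ι * ‖u - m‖ ^ 2 - 2 * inner ℝ (u - m) (∑ i, (w i - m)) +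
          ∑ i, ‖w i - m‖ ^ 2 := by
          rw [sum_add_distrib, sum_sub_distrib, inner_sum, ← mul_sum, sum_const, card_univ,
            nsmul_eq_mul]
    _ = _ := by rw [h_center, inner_zero_right, mul_zero, sub_zero]

theorem sum_sum_sub_sq_eq {ι κ : Type*} [Fintype ι] [Fintype κ] (x : κ → ℝ)
    (c : ι → κ → ℝ) :
    ∑ i, ∑ l, (x l - c i l) ^ 2 =
      Fintype.card ι * ∑ l, (x l - (∑ i, c i l) / Fintype.card ι) ^ 2 +
        ∑ i, ∑ l, ((∑ j, c j l) / Fintype.card ι - c i l) ^ 2 := by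
  have h_coord (l : κ) := sum_norm_sub_sq_eq (x l) (c · l)
  simp only [Real.norm_eq_abs, sq_abs, smul_eq_mul, ← div_eq_inv_mul] at h_coord
  rw [sum_comm, sum_congr rfl fun l _ => h_coord l, sum_add_distrib, mul_sum, sum_comm]
  simp only [sub_sq_comm (c _ _)]

theorem monotone_sum_div {α ι : Type*} [Preorder α] {f : ι → α → ℝ} (hf : ∀ i, Monotone (f i))
    (s : Finset ι) {c : ℝ} (hc : 0 ≤ c) : Monotone fun a => (∑ i ∈ s, f i a) / c :=
  fun _ _ h => div_le_div_of_nonneg_right (sum_le_sum fun i _ => hf i h) hc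

theorem topological_interpolation_general (lam : ℝ) (n : ℕ) (E : Type*) [Fintype E] (p q : ℕ)
    (u : EuclideanSpace ℝ E) (w : Fin n → EuclideanSpace ℝ E)
    (β : Fin p → ℝ) (b : Fin n → Fin p → ℝ)
    (δ : Fin q → ℝ) (d : Fin n → Fin q → ℝ)
    (hβ : Monotone β) (hb : ∀ i, Monotone (b i))
    (hδ : Monotone δ) (hd : ∀ i, Monotone (d i)) :
    ∑ i, ((1 - lam) * ‖u - w i‖ ^ 2 +
        lam * (matchDist p β (b i) + matchDist q δ (d i))) =
      (n : ℝ) * (1 - lam) * ‖u - (n : ℝ)⁻¹ • ∑ i, w i‖ ^ 2 +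
        (n : ℝ) * lam * (matchDist p β (fun l => (∑ i, b i l) / (n : ℝ)) +
          matchDist q δ (fun l => (∑ i, d i l) / (n : ℝ))) +
        (1 - lam) * ∑ i, ‖w i - (n : ℝ)⁻¹ • ∑ j, w j‖ ^ 2 +
        lam * ∑ i, (matchDist p (fun l => (∑ j, b j l) / (n : ℝ)) (b i) +
          matchDist q (fun l => (∑ j, d j l) / (n : ℝ)) (d i)) := by
  have hb_mean := monotone_sum_div hb univ n.cast_nonneg
  have hd_mean := monotone_sum_div hd univ n.cast_nonneg
  have hD {m : ℕ} {x y : Fin m → ℝ} (hx : Monotone x) (hy : Monotone y) :=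
    matchDist_eq_sum_sq_of_monovary (hx.monovary hy)
  have hw := sum_norm_sub_sq_eq u w
  have hβb := sum_sum_sub_sq_eq β b
  have hδd := sum_sum_sub_sq_eq δ d
  simp only [Fintype.card_fin] at hw hβb hδd
  simp only [hD hβ (hb _), hD hδ (hd _), hD hβ hb_mean, hD hδ hd_mean, hD hb_mean (hb _),
    hD hd_mean (hd _), sum_add_distrib, ← mul_sum, mul_add]
  linear_combination (1 - lam) * hw + lam * hβb + lam * hδd

/-- Topological interpolation (the paper's Lemma 2): the within-cluster sum of network
dissimilarities `(1-λ)‖u - wᵢ‖² + λ(D(β,bᵢ) + D(δ,dᵢ))` equals `n` times the dissimilarity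
to the pair (sample mean network, topological centroid) plus a constant independent of the
candidate representative `(u, β, δ)`. -/
theorem topological_interpolation (lam : ℝ) (hlam : lam ∈ Set.Icc (0 : ℝ) 1)
    (n : ℕ) (hn : 1 ≤ n) (E : Type*) [Fintype E] (p q : ℕ)
    (u : EuclideanSpace ℝ E) (w : Fin n → EuclideanSpace ℝ E)
    (β : Fin p → ℝ) (b : Fin n → Fin p → ℝ)
    (δ : Fin q → ℝ) (d : Fin n → Fin q → ℝ)
    (hβ : Monotone β) (hb : ∀ i, Monotone (b i))
    (hδ : Monotone δ) (hd : ∀ i, Monotone (d i)) :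
    ∑ i, ((1 - lam) * ‖u - w i‖ ^ 2 +
        lam * (matchDist p β (b i) + matchDist q δ (d i))) =
      (n : ℝ) * (1 - lam) * ‖u - (n : ℝ)⁻¹ • ∑ i, w i‖ ^ 2 +
        (n : ℝ) * lam * (matchDist p β (fun l => (∑ i, b i l) / (n : ℝ)) +
          matchDist q δ (fun l => (∑ i, d i l) / (n : ℝ))) +
        (1 - lam) * ∑ i, ‖w i - (n : ℝ)⁻¹ • ∑ j, w j‖ ^ 2 +
        lam * ∑ i, (matchDist p (fun l => (∑ j, b j l) / (n : ℝ)) (b i) +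
          matchDist q (fun l => (∑ j, d j l) / (n : ℝ)) (d i)) :=
  topological_interpolation_general lam n E p q u w β b δ d hβ hb hδ hd
end

section
/- Let X be a finite nonempty type of data points, k ≥ 1, Y a type of cluster representatives, and d : Y → X → ℝ a dissimilarity function. Suppose a : ℕ → X → Fin k and M : ℕ → Fin k → Y satisfy the assignment-step and re-estimation-step conditions (for all t: for all x, h, d (M t (a (t+1) x)) x ≤ d (M t h) x; and for all h, ∑_{x : a (t+1) x = h} d (M (t+1) h) x ≤ ∑_{x : a (t+1) x = h} d (M t h) x), and suppose additionally that the representatives are a fixed function of the assignment: there exists μ : (X → Fin k) → (Fin k → Y) with M t = μ (a t) for all t. Then the objective sequence L t = ∑_{x : X} d (M t (a t x)) x is eventually constant: there exists T such that L t = L T for all t ≥ T. -/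
open Finset in
/-- Termination of the clustering algorithm: under the assignment-step and re-estimation-step
conditions, if the representatives are a fixed function of the assignment, then the objective
sequence `L t = ∑ x, d (M t (a t x)) x` is eventually constant. -/
theorem clustering_objective_eventually_constant
    (X : Type*) [Fintype X] [Nonempty X] (k : ℕ) (hk : 1 ≤ k)
    (Y : Type*) (d : Y → X → ℝ)
    (a : ℕ → X → Fin k) (M : ℕ → Fin k → Y)
    (hassign : ∀ (t : ℕ) (x : X) (h : Fin k), d (M t (a (t + 1) x)) x ≤ d (M t h) x)
    (hrestim : ∀ (t : ℕ) (h : Fin k),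
      ∑ x ∈ univ.filter (fun x => a (t + 1) x = h), d (M (t + 1) h) x ≤
        ∑ x ∈ univ.filter (fun x => a (t + 1) x = h), d (M t h) x)
    (μ : (X → Fin k) → (Fin k → Y)) (hμ : ∀ t, M t = μ (a t)) :
    ∃ T : ℕ, ∀ t ≥ T,
      ∑ x : X, d (M t (a t x)) x = ∑ x : X, d (M T (a T x)) x := by
  letI := Classical.decEq X
  set L : ℕ → ℝ := fun t => ∑ x : X, d (M t (a t x)) x with hL
  -- L is nonincreasing
  have hstep : ∀ t, L (t + 1) ≤ L t := by
    intro t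
    have h1 : L (t + 1) = ∑ h : Fin k,
        ∑ x ∈ univ.filter (fun x => a (t + 1) x = h), d (M (t + 1) h) x := by
      show ∑ x : X, d (M (t+1) (a (t+1) x)) x = _
      rw [← Finset.sum_fiberwise univ (fun x => a (t + 1) x) (fun x => d (M (t+1) (a (t+1) x)) x)]
      refine Finset.sum_congr rfl fun h _ => Finset.sum_congr rfl fun x hx => ?_
      simp only [Finset.mem_filter] at hx
      rw [hx.2]
    have h2 : (∑ h : Fin k, ∑ x ∈ univ.filter (fun x => a (t + 1) x = h), d (M t h) x)
        = ∑ x : X, d (M t (a (t + 1) x)) x := by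
      rw [← Finset.sum_fiberwise univ (fun x => a (t + 1) x) (fun x => d (M t (a (t+1) x)) x)]
      refine Finset.sum_congr rfl fun h _ => Finset.sum_congr rfl fun x hx => ?_
      simp only [Finset.mem_filter] at hx
      rw [hx.2]
    calc L (t + 1) = _ := h1
      _ ≤ ∑ h : Fin k, ∑ x ∈ univ.filter (fun x => a (t + 1) x = h), d (M t h) x :=
          Finset.sum_le_sum fun h _ => hrestim t h
      _ = ∑ x : X, d (M t (a (t + 1) x)) x := h2
      _ ≤ ∑ x : X, d (M t (a t x)) x :=
          Finset.sum_le_sum fun x _ => hassign t x (a t x)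
      _ = L t := rfl
  have hanti : Antitone L := antitone_nat_of_succ_le hstep
  -- L has finite range
  have hmem : ∀ t, L t ∈ Finset.image (fun A : X → Fin k => ∑ x : X, d (μ A (A x)) x)
      Finset.univ := by
    intro t
    refine Finset.mem_image.mpr ⟨a t, Finset.mem_univ _, ?_⟩
    simp [hL, hμ t]
  set S := Finset.image (fun A : X → Fin k => ∑ x : X, d (μ A (A x)) x) Finset.univ with hS
  have hSne : S.Nonempty := ⟨L 0, hmem 0⟩
  have hfin : (Set.range L).Finite :=
    Set.Finite.subset S.finite_toSet (by rintro _ ⟨t, rfl⟩; exact hmem t)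
  have hne : hfin.toFinset.Nonempty := ⟨L 0, by simp⟩
  have hmin := hfin.toFinset.min'_mem hne
  rw [Set.Finite.mem_toFinset, Set.mem_range] at hmin
  obtain ⟨T, hT⟩ := hmin
  refine ⟨T, fun t ht => le_antisymm (hanti ht) ?_⟩
  show L T ≤ L t
  rw [hT]
  exact Finset.min'_le _ _ (by simp)
end

section
/- Let G be a connected simple graph on a finite vertex type V and let w : Sym2 V → ℝ be an edge-weight function that is injective on the edge set of G. Let T be a maximum-weight spanning tree of G, i.e., a connected acyclic spanning subgraph T ≤ G maximizing the total weight ∑_{e ∈ E(T)} w(e) among all spanning trees of G. Then for every edge e ∈ E(G) with endpoints u and v, e ∈ E(T) if and only if u and v lie in different connected components of the spanning subgraph G_{> w(e)} of G whose edge set is { f ∈ E(G) : w(f) > w(e) }. -/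
/-!
An edge `e = uv` of a maximum spanning tree `T` is a bridge of `T`; if `u` and `v` were joined by
a path of heavier edges of `G`, one of them would cross the cut of `T - e`, and exchanging it for
`e` would produce a heavier spanning tree. Conversely, if `uv ∉ T`, the `T`-path from `u` to `v`
must contain an edge `f` with `w f ≤ w uv` (otherwise it runs inside the heavier subgraph), and
by injectivity `w f < w uv`; exchanging `f` for `uv` again produces a heavier spanning tree.
-/

open SimpleGraph

namespace SimpleGraph

variable {V : Type*} {G H T : SimpleGraph V} {a b u v x y : V}

lemma reachable_le_of_adj_le_reachable (h : H.Adj ≤ G.Reachable) : H.Reachable ≤ G.Reachable := by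
  simp only [reachable_eq_reflTransGen] at h ⊢
  exact Relation.reflTransGen_closed h

lemma Connected.reachable_or_reachable_deleteEdges (hT : T.Connected) (z : V) :
    (T.deleteEdges {s(x, y)}).Reachable z x ∨ (T.deleteEdges {s(x, y)}).Reachable z y := by
  classical
  obtain ⟨p, hp⟩ := hT.exists_isPath z x
  by_cases hxy : s(x, y) ∈ p.edges
  · have hy := p.snd_mem_support_of_mem_edges hxy
    have hx := Walk.endpoint_notMem_support_takeUntil hp hy (p.adj_of_mem_edges hxy).ne
    have hxy' : s(x, y) ∉ (p.takeUntil y hy).edges :=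
      fun h ↦ hx ((p.takeUntil y hy).fst_mem_support_of_mem_edges h)
    exact .inr ⟨(p.takeUntil y hy).toDeleteEdges {s(x, y)} fun _ he h ↦ hxy' (h ▸ he)⟩
  · exact .inl ⟨p.toDeleteEdges {s(x, y)} fun _ he h ↦ hxy (h ▸ he)⟩

lemma Connected.connected_deleteEdges_sup_edge (hT : T.Connected)
    (hab : ¬ (T.deleteEdges {s(x, y)}).Reachable a b) :
    (T.deleteEdges {s(x, y)} ⊔ edge a b).Connected := by
  set F := T.deleteEdges {s(x, y)}
  have hFle : F ≤ F ⊔ edge a b := le_sup_left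
  have hne : a ≠ b := by rintro rfl; exact hab .rfl
  have hab' : (F ⊔ edge a b).Reachable a b :=
    Adj.reachable (.inr ((edge_adj ..).mpr ⟨.inl ⟨rfl, rfl⟩, hne⟩))
  have hor := hT.reachable_or_reachable_deleteEdges (x := x) (y := y)
  have hxy : (F ⊔ edge a b).Reachable x y := by
    rcases hor a with hax | hay <;> rcases hor b with hbx | hby
    · exact absurd (hax.trans hbx.symm) hab
    · exact ((hax.mono hFle).symm.trans hab').trans (hby.mono hFle)
    · exact ((hbx.mono hFle).symm.trans hab'.symm).trans (hay.mono hFle)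
    · exact absurd (hay.trans hby.symm) hab
  refine (connected_iff_exists_forall_reachable _).2 ⟨x, fun z ↦ ?_⟩
  rcases hor z with hzx | hzy
  · exact (hzx.mono hFle).symm
  · exact hxy.trans (hzy.mono hFle).symm

lemma finsum_edgeSet_deleteEdges_sup_edge [Finite V] {M : Type*} [AddCommGroup M]
    (f : Sym2 V → M) {e : Sym2 V} (he : e ∈ T.edgeSet)
    (hab : ¬ (T.deleteEdges {e}).Reachable a b) :
    ∑ᶠ i ∈ (T.deleteEdges {e} ⊔ edge a b).edgeSet, f i
      = ∑ᶠ i ∈ T.edgeSet, f i - f e + f s(a, b) := by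
  have hne : a ≠ b := by rintro rfl; exact hab .rfl
  have hnotMem : s(a, b) ∉ T.edgeSet \ {e} := by
    rw [← edgeSet_deleteEdges]; exact fun h ↦ hab (Adj.reachable h)
  have hfin : (T.edgeSet \ {e}).Finite := Set.toFinite _
  rw [edgeSet_sup, edgeSet_deleteEdges, edgeSet_edge_of_ne hne, Set.union_singleton,
    finsum_mem_insert f hnotMem hfin, ← Set.insert_sdiff_self_of_mem he,
    finsum_mem_insert f (fun h ↦ h.2 rfl) hfin, Set.insert_sdiff_self_of_mem he]
  abel

lemma IsAcyclic.not_reachable_deleteEdges_of_mem_edges (hT : T.IsAcyclic) {p : T.Walk u v}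
    (hp : p.IsPath) {e : Sym2 V} (he : e ∈ p.edges) : ¬ (T.deleteEdges {e}).Reachable u v := by
  classical
  obtain ⟨x, y⟩ := e
  rintro hr
  obtain ⟨q, hq⟩ := reachable_deleteEdges_iff_exists_walk.mp hr
  have hpq : (q.toPath : T.Walk u v) = p :=
    congrArg Subtype.val ((hT.subsingleton_path u v).elim q.toPath ⟨p, hp⟩)
  exact hq (q.edges_toPath_subset_edges (hpq ▸ he))

/-- `T - xy + ab` is again a spanning tree of `G`, so maximality of `T` bounds its weight. -/
theorem weight_le_of_not_reachable_deleteEdges [Finite V] {w : Sym2 V → ℝ} (hTG : T ≤ G)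
    (hT : T.Connected) (hTacyc : T.IsAcyclic)
    (hmax : ∀ T' : SimpleGraph V, T' ≤ G → T'.Connected → T'.IsAcyclic →
      ∑ᶠ e ∈ T'.edgeSet, w e ≤ ∑ᶠ e ∈ T.edgeSet, w e)
    (hxy : s(x, y) ∈ T.edgeSet) (hab : G.Adj a b)
    (hnr : ¬ (T.deleteEdges {s(x, y)}).Reachable a b) : w s(a, b) ≤ w s(x, y) := by
  have hle : T.deleteEdges {s(x, y)} ⊔ edge a b ≤ G :=
    sup_le ((deleteEdges_le _).trans hTG) ((edge_le_iff (G := G)).mpr (.inr hab))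
  have := hmax _ hle (hT.connected_deleteEdges_sup_edge hnr)
    ((hTacyc.anti (deleteEdges_le _)).sup_edge_of_not_reachable hnr)
  rw [finsum_edgeSet_deleteEdges_sup_edge w hxy hnr] at this
  linarith

end SimpleGraph

theorem max_spanning_tree_cut_characterization_general (V : Type*) [Fintype V]
    (G : SimpleGraph V)
    (w : Sym2 V → ℝ) (hw : Set.InjOn w G.edgeSet)
    (T : SimpleGraph V) (hTG : T ≤ G) (hTconn : T.Connected) (hTacyc : T.IsAcyclic)
    (hmax : ∀ T' : SimpleGraph V, T' ≤ G → T'.Connected → T'.IsAcyclic →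
      ∑ᶠ e ∈ T'.edgeSet, w e ≤ ∑ᶠ e ∈ T.edgeSet, w e)
    (u v : V) (huv : G.Adj u v) :
    s(u, v) ∈ T.edgeSet ↔
      ¬ (SimpleGraph.fromEdgeSet {f | f ∈ G.edgeSet ∧ w s(u, v) < w f}).Reachable u v := by
  constructor
  · intro he hH
    refine isAcyclic_iff_forall_adj_isBridge.mp hTacyc he
      (reachable_le_of_adj_le_reachable (fun a b hab ↦ ?_) u v hH)
    obtain ⟨⟨habG, hlt⟩, -⟩ := fromEdgeSet_adj _ |>.mp hab
    by_contra hnr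
    exact (weight_le_of_not_reachable_deleteEdges hTG hTconn hTacyc hmax he habG hnr).not_gt hlt
  · intro hH
    by_contra he
    obtain ⟨p, hp⟩ := hTconn.exists_isPath u v
    obtain ⟨f, hfw, hfp⟩ := p.exists_mem_edges_of_not_reachable_deleteEdges
      (s := {f | w f ≤ w s(u, v)}) fun hr ↦ hH <| hr.mono fun a b hab ↦ by
        simp only [deleteEdges_adj, Set.mem_ofPred_eq, not_le] at hab
        exact (fromEdgeSet_adj _).mpr ⟨⟨hTG hab.1, hab.2⟩, hab.1.ne⟩
    have hfT := p.edges_subset_edgeSet hfp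
    have hlt : w f < w s(u, v) :=
      lt_of_le_of_ne hfw fun h ↦ he (hw (edgeSet_mono hTG hfT) huv h ▸ hfT)
    obtain ⟨x, y⟩ := f
    exact hlt.not_ge <| weight_le_of_not_reachable_deleteEdges hTG hTconn hTacyc hmax hfT huv
      (hTacyc.not_reachable_deleteEdges_of_mem_edges hp hfp)

/-- Cut characterization of the maximum-weight spanning tree: if `T` is a spanning tree of a
connected graph `G` maximizing the total edge weight for a weight function `w` injective on
`E(G)`, then an edge `s(u,v)` of `G` belongs to `T` if and only if `u` and `v` lie in
different connected components of the spanning subgraph of `G` whose edges are those of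
weight strictly greater than `w s(u,v)`. -/
theorem max_spanning_tree_cut_characterization (V : Type*) [Fintype V]
    (G : SimpleGraph V) (hG : G.Connected)
    (w : Sym2 V → ℝ) (hw : Set.InjOn w G.edgeSet)
    (T : SimpleGraph V) (hTG : T ≤ G) (hTconn : T.Connected) (hTacyc : T.IsAcyclic)
    (hmax : ∀ T' : SimpleGraph V, T' ≤ G → T'.Connected → T'.IsAcyclic →
      ∑ᶠ e ∈ T'.edgeSet, w e ≤ ∑ᶠ e ∈ T.edgeSet, w e)
    (u v : V) (huv : G.Adj u v) :
    s(u, v) ∈ T.edgeSet ↔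
      ¬ (SimpleGraph.fromEdgeSet {f | f ∈ G.edgeSet ∧ w s(u, v) < w f}).Reachable u v :=
  max_spanning_tree_cut_characterization_general V G w hw T hTG hTconn hTacyc hmax u v huv
end
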